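/- arXiv:2604.09970 — 4 statements merged into one kernel-verified Lean document; each statement's English description precedes it below -/
import Mathlib

section
/- For the sequences generated by Algorithm LoDAdaC, the auxiliary sequence z^t = x̄^t + (β₁/(1−β₁))(x̄^t − x̄^{t−1}) (with x̄^{−1} = x̄^0) satisfies, for all t ∈ {0,…,TK−1}: z^{t+1} − z^t = (β₁/(1−β₁))·(α/n)·∑_{i=1}^n m_i^{t−1} ∘ (1/√(u_i^{t−2}+δ) − 1/√(u_i^{t−1}+δ)) − (α/n)·∑_{i=1}^n g_i^t/√(u_i^{t−1}+δ), where u_i^{−2} = 0. -/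
open MeasureTheory Finset Real
open scoped RealInnerProductSpace

noncomputable section

/-- Frobenius norm squared of a `d × n` real matrix. -/
def frobSq {d n : ℕ} (A : Matrix (Fin d) (Fin n) ℝ) : ℝ := ∑ k, ∑ i, (A k i) ^ 2

/-- Frobenius norm of a `d × n` real matrix. -/
def frob {d n : ℕ} (A : Matrix (Fin d) (Fin n) ℝ) : ℝ := Real.sqrt (frobSq A)

/-- The averaging matrix `J = 𝟙𝟙ᵀ/n`. -/
def Jmat (n : ℕ) : Matrix (Fin n) (Fin n) ℝ := Matrix.of fun _ _ => (n : ℝ)⁻¹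

/-- The `i`-th column of a matrix, as a vector in Euclidean space. -/
def col {d n : ℕ} (A : Matrix (Fin d) (Fin n) ℝ) (i : Fin n) : EuclideanSpace ℝ (Fin d) :=
  WithLp.toLp 2 fun k => A k i

/-- The average of the columns of a matrix. -/
def avg {d n : ℕ} (A : Matrix (Fin d) (Fin n) ℝ) : EuclideanSpace ℝ (Fin d) :=
  WithLp.toLp 2 fun k => (∑ i, A k i) / n

/-- Componentwise `1/√(u + δ)`. -/
def invSq {d : ℕ} (u : EuclideanSpace ℝ (Fin d)) (δ : ℝ) : EuclideanSpace ℝ (Fin d) :=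
  WithLp.toLp 2 fun k => (Real.sqrt (u k + δ))⁻¹

/-- Componentwise (Hadamard) product of vectors. -/
def odot {d : ℕ} (a b : EuclideanSpace ℝ (Fin d)) : EuclideanSpace ℝ (Fin d) :=
  WithLp.toLp 2 fun k => a k * b k

/-- Componentwise `a/√(u + δ)`. -/
def adiv {d : ℕ} (a u : EuclideanSpace ℝ (Fin d)) (δ : ℝ) : EuclideanSpace ℝ (Fin d) :=
  WithLp.toLp 2 fun k => a k / Real.sqrt (u k + δ)

/-- Spectral norm of a square real matrix. -/
def specNorm {n : ℕ} (A : Matrix (Fin n) (Fin n) ℝ) : ℝ :=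
  ‖LinearMap.toContinuousLinearMap (Matrix.toEuclideanLin A)‖

/-- Lemma A.3. For the sequences generated by Algorithm LoDAdaC, the auxiliary
sequence `zᵗ = x̄ᵗ + (β₁/(1−β₁))(x̄ᵗ − x̄ᵗ⁻¹)` (with `x̄⁻¹ = x̄⁰`) satisfies, for all
`t ∈ {0,…,TK−1}`:
`zᵗ⁺¹ − zᵗ = (β₁/(1−β₁))(α/n) ∑ᵢ mᵢᵗ⁻¹ ∘ (1/√(uᵢᵗ⁻²+δ) − 1/√(uᵢᵗ⁻¹+δ)) − (α/n) ∑ᵢ gᵢᵗ/√(uᵢᵗ⁻¹+δ)`. -/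
theorem stmt4 (d n T K : ℕ) (hn : 0 < n) (hK : 0 < K)
    (α β₁ δ γ : ℝ) (hα : 0 < α) (hβ₁0 : 0 ≤ β₁) (hβ₁1 : β₁ < 1) (hδ : 0 < δ)
    (hγ0 : 0 ≤ γ) (hγ1 : γ ≤ 1)
    -- mixing matrix: nonnegative and doubly stochastic
    (W : Matrix (Fin n) (Fin n) ℝ)
    (hWpos : ∀ i j, 0 ≤ W i j)
    (hWrow : ∀ i, ∑ j, W i j = 1)
    (hWcol : ∀ j, ∑ i, W i j = 1)
    -- iterate sequences of Algorithm LoDAdaC (one realization of the randomness)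
    (X Xu G : ℕ → Matrix (Fin d) (Fin n) ℝ)
    (C : ℕ → Matrix (Fin d) (Fin n) ℝ)   -- compressed messages `Q[X^{t+1/2} − X̲ᵗ]`
    (M U : ℤ → Matrix (Fin d) (Fin n) ℝ)
    (Y : ℕ → Matrix (Fin d) (Fin n) ℝ)
    (x0 : EuclideanSpace ℝ (Fin d))
    (hX0 : ∀ k i, X 0 k i = x0 k) (hXu0 : ∀ k i, Xu 0 k i = x0 k)
    (hM0 : M (-1) = 0) (hU1 : U (-1) = 0) (hU2 : U (-2) = 0)
    (hUpos : ∀ (t : ℤ) (k : Fin d) (i : Fin n), 0 ≤ U t k i)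
    (hMrec : ∀ t : ℕ, M (t : ℤ) = β₁ • M ((t : ℤ) - 1) + (1 - β₁) • G t)
    (hY : ∀ t : ℕ, Y t = Matrix.of fun k i => M (t : ℤ) k i / Real.sqrt (U ((t : ℤ) - 1) k i + δ))
    (hcomm : ∀ t : ℕ, (t + 1) % K = 0 →
      Xu (t + 1) = Xu t + C t ∧
      X (t + 1) = (X t - α • Y t) + γ • (Xu (t + 1) * (W - 1)))
    (hlocal : ∀ t : ℕ, (t + 1) % K ≠ 0 →
      X (t + 1) = X t - α • Y t ∧ Xu (t + 1) = Xu t)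
    -- the auxiliary sequence `zᵗ`
    (z : ℕ → EuclideanSpace ℝ (Fin d))
    (hz0 : z 0 = avg (X 0))
    (hz : ∀ t : ℕ, z (t + 1) = avg (X (t + 1)) + (β₁ / (1 - β₁)) • (avg (X (t + 1)) - avg (X t))) :
    ∀ t : ℕ, t < T * K →
      z (t + 1) - z t
        = (β₁ / (1 - β₁)) • ((α / n) • ∑ i,
              odot (col (M ((t : ℤ) - 1)) i)
                (invSq (col (U ((t : ℤ) - 2)) i) δ - invSq (col (U ((t : ℤ) - 1)) i) δ))
          - (α / n) • ∑ i, adiv (col (G t) i) (col (U ((t : ℤ) - 1)) i) δ := by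
  have hn' : (n : ℝ) ≠ 0 := Nat.cast_ne_zero.mpr hn.ne'
  have hβ : (1 : ℝ) - β₁ ≠ 0 := by linarith
  -- average of columns of `A * (W - 1)` is zero
  have hzeroW : ∀ (A : Matrix (Fin d) (Fin n) ℝ) (k : Fin d),
      ∑ i, ((A * (W - 1) : Matrix (Fin d) (Fin n) ℝ)) k i = 0 := by
    intro A k
    simp only [Matrix.mul_apply]
    rw [Finset.sum_comm]
    apply Finset.sum_eq_zero
    intro j _
    rw [← Finset.mul_sum]
    have h1 : ∑ i, (W - 1) j i = 0 := by
      simp only [Matrix.sub_apply, Finset.sum_sub_distrib, hWrow j, Matrix.one_apply]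
      simp
    rw [h1, mul_zero]
  -- one-step evolution of the average
  have hstep : ∀ (s : ℕ) (k : Fin d),
      avg (X (s + 1)) k = avg (X s) k - α * (∑ i, Y s k i) / n := by
    intro s k
    unfold avg
    by_cases h : (s + 1) % K = 0
    · rw [(hcomm s h).2]
      simp only [Matrix.add_apply, Matrix.sub_apply, Matrix.smul_apply, smul_eq_mul,
        Finset.sum_add_distrib, Finset.sum_sub_distrib, ← Finset.mul_sum,
        hzeroW (Xu (s + 1)) k, mul_zero, add_zero]
      ring
    · rw [(hlocal s h).1]
      simp only [Matrix.sub_apply, Matrix.smul_apply, smul_eq_mul,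
        Finset.sum_sub_distrib, ← Finset.mul_sum]
      ring
  intro t _
  refine PiLp.ext fun k => ?_
  have hsum : ∀ (f : Fin n → EuclideanSpace ℝ (Fin d)), (∑ i, f i) k = ∑ i, f i k :=
    fun f => by rw [WithLp.ofLp_sum, Finset.sum_apply]
  cases t with
  | zero =>
    rw [hz 0, hz0]
    have hY0 : ∀ i, Y 0 k i = (1 - β₁) * (G 0 k i / Real.sqrt (U (-1) k i + δ)) := by
      intro i
      have hm := hMrec 0
      rw [hY 0]
      simp only [Nat.cast_zero, zero_sub] at hm ⊢
      rw [hm, hM0]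
      simp [Matrix.add_apply, Matrix.smul_apply, mul_div_assoc]
    have hS : (∑ i, Y 0 k i)
        = (1 - β₁) * ∑ i, G 0 k i / Real.sqrt (U (-1) k i + δ) := by
      rw [Finset.mul_sum]
      exact Finset.sum_congr rfl fun i _ => hY0 i
    have h1 := hstep 0 k
    simp only [PiLp.sub_apply, PiLp.add_apply, PiLp.smul_apply, smul_eq_mul, hsum]
    simp only [Nat.cast_zero, zero_sub]
    simp only [odot, col, invSq, adiv, PiLp.toLp_apply, PiLp.sub_apply, hM0, Matrix.zero_apply, zero_mul,
      Finset.sum_const_zero, mul_zero, zero_sub]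
    rw [h1, hS]
    field_simp
    ring
  | succ s =>
    have e1 : ((s + 1 : ℕ) : ℤ) - 1 = (s : ℤ) := by push_cast; ring
    have e2 : ((s + 1 : ℕ) : ℤ) - 2 = (s : ℤ) - 1 := by push_cast; ring
    set A := ∑ i, M (s : ℤ) k i / Real.sqrt (U ((s : ℤ) - 1) k i + δ) with hA
    set B := ∑ i, M (s : ℤ) k i / Real.sqrt (U (s : ℤ) k i + δ) with hB
    set Cc := ∑ i, G (s + 1) k i / Real.sqrt (U (s : ℤ) k i + δ) with hCc
    have hYs : (∑ i, Y s k i) = A := by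
      rw [hA]
      exact Finset.sum_congr rfl fun i _ => by rw [hY s]; rfl
    have hYs1 : (∑ i, Y (s + 1) k i) = β₁ * B + (1 - β₁) * Cc := by
      have hm := hMrec (s + 1)
      rw [e1] at hm
      have : ∀ i, Y (s + 1) k i
          = β₁ * (M (s : ℤ) k i / Real.sqrt (U (s : ℤ) k i + δ))
            + (1 - β₁) * (G (s + 1) k i / Real.sqrt (U (s : ℤ) k i + δ)) := by
        intro i
        rw [hY (s + 1)]
        simp only [Matrix.of_apply, e1, hm, Matrix.add_apply, Matrix.smul_apply, smul_eq_mul]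
        ring
      rw [Finset.sum_congr rfl fun i _ => this i, Finset.sum_add_distrib,
        ← Finset.mul_sum, ← Finset.mul_sum, hB, hCc]
    have h1 := hstep (s + 1) k
    have h2 := hstep s k
    rw [hz (s + 1), hz s]
    simp only [PiLp.sub_apply, PiLp.add_apply, PiLp.smul_apply, smul_eq_mul, hsum]
    simp only [odot, col, invSq, adiv, PiLp.toLp_apply, PiLp.sub_apply, e1, e2]
    have hsplit : (∑ i, M (s : ℤ) k i
          * ((Real.sqrt (U ((s : ℤ) - 1) k i + δ))⁻¹ - (Real.sqrt (U (s : ℤ) k i + δ))⁻¹))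
        = A - B := by
      rw [hA, hB, ← Finset.sum_sub_distrib]
      refine Finset.sum_congr rfl fun i _ => ?_
      rw [mul_sub, div_eq_mul_inv, div_eq_mul_inv]
    rw [hsplit, h1, h2, hYs, hYs1]
    field_simp
    ring
end
end

section
/- For the Adam second-momentum update with u_i^t = β₂·u_i^{t−1} + (1−β₂)·g_i^t ∘ g_i^t and u_i^{−1} = u_i^{−2} = 0, if ‖g_i^t‖_∞ ≤ B_∞ for all i and t, then ‖u_i^t‖_∞ ≤ B_∞² for all t ≥ 0 and i ∈ {1,…,n}, and ∑_{t=0}^{TK−1} (1/n)·∑_{i=1}^n ‖1/√(u_i^{t−2}+δ) − 1/√(u_i^{t−1}+δ)‖² ≤ TK·d·(1−β₂)²·B_∞⁴/δ³. -/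
open MeasureTheory Finset Real
open scoped RealInnerProductSpace

noncomputable section

lemma key_sq (δ : ℝ) (hδ : 0 < δ) (x y C : ℝ) (hx : 0 ≤ x) (hy : 0 ≤ y)
    (hC : |x - y| ≤ C) :
    ((Real.sqrt (x + δ))⁻¹ - (Real.sqrt (y + δ))⁻¹) ^ 2 ≤ C ^ 2 / δ ^ 3 := by
  have hδ' : (0:ℝ) < Real.sqrt δ := Real.sqrt_pos.mpr hδ
  have ha : (0:ℝ) < Real.sqrt (x + δ) := Real.sqrt_pos.mpr (by linarith)
  have hb : (0:ℝ) < Real.sqrt (y + δ) := Real.sqrt_pos.mpr (by linarith)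
  have haδ : Real.sqrt δ ≤ Real.sqrt (x + δ) := Real.sqrt_le_sqrt (by linarith)
  have hbδ : Real.sqrt δ ≤ Real.sqrt (y + δ) := Real.sqrt_le_sqrt (by linarith)
  set a := Real.sqrt (x + δ) with hadef
  set b := Real.sqrt (y + δ) with hbdef
  have ha2 : a ^ 2 = x + δ := Real.sq_sqrt (by linarith)
  have hb2 : b ^ 2 = y + δ := Real.sq_sqrt (by linarith)
  have hsd : Real.sqrt δ ^ 2 = δ := Real.sq_sqrt hδ.le
  have hC0 : 0 ≤ C := le_trans (abs_nonneg _) hC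
  have key : |a⁻¹ - b⁻¹| ≤ C / (2 * δ * Real.sqrt δ) := by
    have h1 : a⁻¹ - b⁻¹ = (b - a) / (a * b) := by field_simp
    have h2 : (b - a) * (a + b) = y - x := by nlinarith [ha2, hb2]
    have h2' : b - a = (y - x) / (a + b) := by
      field_simp
      linarith [h2]
    have hab : δ ≤ a * b := by nlinarith
    have hsum : 2 * Real.sqrt δ ≤ a + b := by linarith
    rw [h1, h2', div_div, abs_div]
    rw [abs_of_pos (by positivity : (0:ℝ) < (a + b) * (a * b))]
    have hxy : |y - x| ≤ C := by rw [abs_sub_comm]; exact hC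
    have hden : 2 * δ * Real.sqrt δ ≤ (a + b) * (a * b) := by nlinarith
    calc |y - x| / ((a + b) * (a * b)) ≤ C / ((a + b) * (a * b)) :=
          div_le_div_of_nonneg_right hxy (by positivity)
      _ ≤ C / (2 * δ * Real.sqrt δ) :=
          div_le_div_of_nonneg_left hC0 (by positivity) hden
  have h3 : (a⁻¹ - b⁻¹) ^ 2 ≤ (C / (2 * δ * Real.sqrt δ)) ^ 2 := by
    calc (a⁻¹ - b⁻¹) ^ 2 = |a⁻¹ - b⁻¹| ^ 2 := (sq_abs _).symm
      _ ≤ (C / (2 * δ * Real.sqrt δ)) ^ 2 := pow_le_pow_left₀ (abs_nonneg _) key 2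
  refine h3.trans ?_
  rw [div_pow]
  have h4 : (2 * δ * Real.sqrt δ) ^ 2 = 4 * δ ^ 3 := by nlinarith [hsd]
  rw [h4]
  apply div_le_div_of_nonneg_left (by positivity) (by positivity)
  linarith [pow_pos hδ 3]

/-- Adam second momenta. If `‖gᵢᵗ‖_∞ ≤ B_∞`, then the Adam second momenta
satisfy `‖uᵢᵗ‖_∞ ≤ B_∞²` for all `t ≥ 0`, and
`∑_{t=0}^{TK−1} (1/n) ∑ᵢ ‖1/√(uᵢ^{t−2}+δ) − 1/√(uᵢ^{t−1}+δ)‖² ≤ TK d (1−β₂)² B_∞⁴/δ³`. -/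
theorem stmt11 (d n T K : ℕ) (hn : 0 < n) (hT : 0 < T) (hK : 0 < K)
    (δ β₂ Binf : ℝ) (hδ : 0 < δ) (hβ₂0 : 0 < β₂) (hβ₂1 : β₂ ≤ 1) (hBinf : 0 < Binf)
    (g : Fin n → ℕ → EuclideanSpace ℝ (Fin d))
    (hg : ∀ (i : Fin n) (t : ℕ) (k : Fin d), |g i t k| ≤ Binf)
    (u : Fin n → ℤ → EuclideanSpace ℝ (Fin d))
    (hu1 : ∀ i, u i (-1) = 0) (hu2 : ∀ i, u i (-2) = 0)
    (hu : ∀ (i : Fin n) (t : ℕ),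
      u i (t : ℤ) = β₂ • u i ((t : ℤ) - 1) + (1 - β₂) • odot (g i t) (g i t)) :
    (∀ (t : ℕ) (i : Fin n) (k : Fin d), |u i (t : ℤ) k| ≤ Binf ^ 2) ∧
    ∑ t ∈ Finset.range (T * K),
        (1 / (n : ℝ)) * ∑ i, ‖invSq (u i ((t : ℤ) - 2)) δ - invSq (u i ((t : ℤ) - 1)) δ‖ ^ 2
      ≤ (T * K : ℝ) * d * (1 - β₂) ^ 2 * Binf ^ 4 / δ ^ 3 := by
  have hβ : 0 ≤ 1 - β₂ := by linarith
  have hB2 : ∀ (i : Fin n) (t : ℕ) (k : Fin d), (g i t k) ^ 2 ≤ Binf ^ 2 := by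
    intro i t k
    calc (g i t k) ^ 2 = |g i t k| ^ 2 := (sq_abs _).symm
      _ ≤ Binf ^ 2 := pow_le_pow_left₀ (abs_nonneg _) (hg i t k) 2
  -- bounds for natural-time u
  have Pn : ∀ (t : ℕ) (i : Fin n) (k : Fin d),
      0 ≤ u i (t : ℤ) k ∧ u i (t : ℤ) k ≤ Binf ^ 2 := by
    intro t
    induction t with
    | zero =>
      intro i k
      have h := hu i 0
      simp only [Nat.cast_zero, zero_sub, hu1] at h
      simp only [Nat.cast_zero]
      rw [h]
      simp only [PiLp.add_apply, PiLp.smul_apply, smul_eq_mul, odot, PiLp.toLp_apply, PiLp.zero_apply]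
      constructor
      · nlinarith [sq_nonneg (g i 0 k)]
      · nlinarith [hB2 i 0 k, sq_nonneg (g i 0 k), sq_nonneg Binf]
    | succ m ih =>
      intro i k
      have h := hu i (m + 1)
      have hc : ((m + 1 : ℕ) : ℤ) - 1 = (m : ℤ) := by push_cast; ring
      rw [hc] at h
      rw [h]
      simp only [PiLp.add_apply, PiLp.smul_apply, smul_eq_mul, odot, PiLp.toLp_apply]
      obtain ⟨h1, h2⟩ := ih i k
      constructor
      · nlinarith [sq_nonneg (g i (m+1) k)]
      · nlinarith [hB2 i (m+1) k, sq_nonneg Binf]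
  -- bounds for all relevant integer times
  have Pz : ∀ (s : ℤ), -2 ≤ s → ∀ (i : Fin n) (k : Fin d),
      0 ≤ u i s k ∧ u i s k ≤ Binf ^ 2 := by
    intro s hs i k
    rcases lt_or_ge s 0 with hneg | hpos
    · interval_cases s
      · rw [hu2]; constructor
        · simp
        · simp; positivity
      · rw [hu1]; constructor
        · simp
        · simp; positivity
    · lift s to ℕ using hpos
      exact Pn s i k
  refine ⟨fun t i k => abs_le.mpr ⟨by linarith [(Pn t i k).1, sq_nonneg Binf], (Pn t i k).2⟩, ?_⟩
  -- difference bound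
  have Dbound : ∀ (t : ℕ) (i : Fin n) (k : Fin d),
      |u i ((t : ℤ) - 1) k - u i ((t : ℤ) - 2) k| ≤ (1 - β₂) * Binf ^ 2 := by
    intro t i k
    cases t with
    | zero =>
      simp only [Nat.cast_zero, zero_sub, hu1, hu2]
      simp
      positivity
    | succ m =>
      have hc1 : ((m + 1 : ℕ) : ℤ) - 1 = (m : ℤ) := by push_cast; ring
      have hc2 : ((m + 1 : ℕ) : ℤ) - 2 = (m : ℤ) - 1 := by push_cast; ring
      rw [hc1, hc2]
      have h := hu i m
      rw [h]
      simp only [PiLp.add_apply, PiLp.smul_apply, smul_eq_mul, odot, PiLp.toLp_apply]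
      have hprev := Pz ((m : ℤ) - 1) (by omega) i k
      have hgb := hB2 i m k
      have hgn := sq_nonneg (g i m k)
      have : β₂ * u i ((m:ℤ) - 1) k + (1 - β₂) * (g i m k * g i m k) - u i ((m:ℤ)-1) k
          = (1 - β₂) * (g i m k * g i m k - u i ((m:ℤ)-1) k) := by ring
      rw [this, abs_mul, abs_of_nonneg hβ]
      apply mul_le_mul_of_nonneg_left _ hβ
      rw [abs_le]
      constructor
      · nlinarith [hprev.2]
      · nlinarith [hprev.1]
  -- per-term bound
  have term : ∀ (t : ℕ) (i : Fin n),
      ‖invSq (u i ((t : ℤ) - 2)) δ - invSq (u i ((t : ℤ) - 1)) δ‖ ^ 2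
        ≤ (d : ℝ) * ((1 - β₂) ^ 2 * Binf ^ 4 / δ ^ 3) := by
    intro t i
    rw [EuclideanSpace.norm_eq]
    rw [Real.sq_sqrt (by positivity)]
    calc ∑ k, ‖(invSq (u i ((t:ℤ)-2)) δ - invSq (u i ((t:ℤ)-1)) δ) k‖ ^ 2
        ≤ ∑ _k : Fin d, (1 - β₂) ^ 2 * Binf ^ 4 / δ ^ 3 := by
          apply Finset.sum_le_sum
          intro k _
          simp only [PiLp.sub_apply, invSq, PiLp.toLp_apply, Real.norm_eq_abs, sq_abs]
          have h1 := Pz ((t:ℤ)-2) (by omega) i k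
          have h2 := Pz ((t:ℤ)-1) (by omega) i k
          have := key_sq δ hδ (u i ((t:ℤ)-2) k) (u i ((t:ℤ)-1) k)
            ((1 - β₂) * Binf ^ 2) h1.1 h2.1
            (by rw [abs_sub_comm]; exact Dbound t i k)
          calc ((Real.sqrt (u i ((t:ℤ)-2) k + δ))⁻¹ - (Real.sqrt (u i ((t:ℤ)-1) k + δ))⁻¹) ^ 2
              ≤ ((1 - β₂) * Binf ^ 2) ^ 2 / δ ^ 3 := this
            _ = (1 - β₂) ^ 2 * Binf ^ 4 / δ ^ 3 := by ring
      _ = (d : ℝ) * ((1 - β₂) ^ 2 * Binf ^ 4 / δ ^ 3) := by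
          rw [Finset.sum_const, Finset.card_univ, Fintype.card_fin, nsmul_eq_mul]
  -- assemble
  have step : ∀ t ∈ Finset.range (T * K),
      (1 / (n : ℝ)) * ∑ i, ‖invSq (u i ((t : ℤ) - 2)) δ - invSq (u i ((t : ℤ) - 1)) δ‖ ^ 2
        ≤ (d : ℝ) * ((1 - β₂) ^ 2 * Binf ^ 4 / δ ^ 3) := by
    intro t _
    have hn' : (0:ℝ) < n := Nat.cast_pos.mpr hn
    rw [one_div, inv_mul_le_iff₀ hn']
    calc ∑ i, ‖invSq (u i ((t : ℤ) - 2)) δ - invSq (u i ((t : ℤ) - 1)) δ‖ ^ 2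
        ≤ ∑ _i : Fin n, (d : ℝ) * ((1 - β₂) ^ 2 * Binf ^ 4 / δ ^ 3) :=
          Finset.sum_le_sum fun i _ => term t i
      _ = (n : ℝ) * ((d : ℝ) * ((1 - β₂) ^ 2 * Binf ^ 4 / δ ^ 3)) := by
          rw [Finset.sum_const, Finset.card_univ, Fintype.card_fin, nsmul_eq_mul]
  calc ∑ t ∈ Finset.range (T * K),
        (1 / (n : ℝ)) * ∑ i, ‖invSq (u i ((t : ℤ) - 2)) δ - invSq (u i ((t : ℤ) - 1)) δ‖ ^ 2
      ≤ ∑ _t ∈ Finset.range (T * K), (d : ℝ) * ((1 - β₂) ^ 2 * Binf ^ 4 / δ ^ 3) :=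
        Finset.sum_le_sum step
    _ = (T * K : ℝ) * d * (1 - β₂) ^ 2 * Binf ^ 4 / δ ^ 3 := by
        rw [Finset.sum_const, Finset.card_range, nsmul_eq_mul]
        push_cast
        ring
end
end

section
/- For the AdaGrad second-momentum update with u_i^t = (1/(t+1))·∑_{s=0}^t g_i^s ∘ g_i^s and u_i^{−1} = u_i^{−2} = 0, if ‖g_i^t‖_∞ ≤ B_∞ for all i and t, then ‖u_i^t‖_∞ ≤ B_∞² for all t ≥ 0 and i ∈ {1,…,n}, and ∑_{t=0}^{TK−1} (1/n)·∑_{i=1}^n ‖1/√(u_i^{t−2}+δ) − 1/√(u_i^{t−1}+δ)‖² ≤ 2d·B_∞⁴/δ³. -/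
open MeasureTheory Finset Real
open scoped RealInnerProductSpace

noncomputable section

lemma lip_aux {δ : ℝ} (hδ : 0 < δ) (a b : ℝ) (ha : 0 ≤ a) (hb : 0 ≤ b) :
    |(Real.sqrt (a+δ))⁻¹ - (Real.sqrt (b+δ))⁻¹| ≤ |a - b| / (2*δ*Real.sqrt δ) := by
  wlog hab : b ≤ a generalizing a b
  · have := this b a hb ha (le_of_not_ge hab)
    rwa [abs_sub_comm, abs_sub_comm b a] at this
  have ha' : 0 < a + δ := by linarith
  have hb' : 0 < b + δ := by linarith
  set sa := Real.sqrt (a+δ) with hsadef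
  set sb := Real.sqrt (b+δ) with hsbdef
  have hsa : 0 < sa := Real.sqrt_pos.2 ha'
  have hsb : 0 < sb := Real.sqrt_pos.2 hb'
  have hsab : sb ≤ sa := Real.sqrt_le_sqrt (by linarith)
  have hsa2 : sa^2 = a + δ := Real.sq_sqrt ha'.le
  have hsb2 : sb^2 = b + δ := Real.sq_sqrt hb'.le
  have hsd : Real.sqrt δ ≤ sb := Real.sqrt_le_sqrt (by linarith)
  have hsd0 : 0 < Real.sqrt δ := Real.sqrt_pos.2 hδ
  have hsd2 : Real.sqrt δ ^ 2 = δ := Real.sq_sqrt hδ.le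
  have hinv : sa⁻¹ ≤ sb⁻¹ := by gcongr
  rw [abs_of_nonpos (by linarith), abs_of_nonneg (by linarith), neg_sub]
  have e1 : sb⁻¹ - sa⁻¹ = (sa - sb) * (sa*sb)⁻¹ := by
    field_simp
  have e2 : (sa - sb)*(sa+sb) = a - b := by ring_nf; nlinarith [hsa2, hsb2]
  rw [e1, ← e2, ← div_eq_mul_inv, div_le_div_iff₀ (by positivity) (by positivity)]
  have h4 : 0 ≤ sa - sb := sub_nonneg.2 hsab
  have hprod : δ ≤ sa * sb := by nlinarith
  have hsum : 2*Real.sqrt δ ≤ sa + sb := by linarith [hsd.trans hsab]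
  nlinarith [mul_le_mul hsum hprod hδ.le (by positivity : (0:ℝ) ≤ sa+sb)]

lemma basel_aux (N : ℕ) : ∑ m ∈ Finset.range (N+1), (((m:ℝ)+1)^2)⁻¹ ≤ 2 - ((N:ℝ)+1)⁻¹ := by
  induction N with
  | zero => norm_num
  | succ n ih =>
    rw [Finset.sum_range_succ]
    have key : (((n:ℝ)+1+1)^2)⁻¹ ≤ ((n:ℝ)+1)⁻¹ - ((n:ℝ)+2)⁻¹ := by
      have e : ((n:ℝ)+1)⁻¹ - ((n:ℝ)+2)⁻¹ = (((n:ℝ)+1)*((n:ℝ)+2))⁻¹ := by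
        field_simp
        ring
      rw [e]
      apply inv_anti₀ (by positivity) (by nlinarith)
    have key2 : ((n:ℝ)+1+1)⁻¹ = ((n:ℝ)+2)⁻¹ := by rw [show ((n:ℝ)+1+1) = (n:ℝ)+2 from by ring]
    push_cast
    rw [key2]
    linarith

lemma basel (N : ℕ) : ∑ m ∈ Finset.range N, (((m:ℝ)+1)^2)⁻¹ ≤ 2 := by
  cases N with
  | zero => norm_num
  | succ n =>
    have h : (0:ℝ) < ((n:ℝ)+1)⁻¹ := by positivity
    linarith [basel_aux n]

lemma normsq_eq {d:ℕ} (v : EuclideanSpace ℝ (Fin d)) : ‖v‖^2 = ∑ k, (v k)^2 := by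
  rw [EuclideanSpace.norm_eq, Real.sq_sqrt (by positivity)]
  simp [sq_abs]


/-- AdaGrad second momenta. If `‖gᵢᵗ‖_∞ ≤ B_∞`, then the (averaged) AdaGrad
second momenta satisfy `‖uᵢᵗ‖_∞ ≤ B_∞²` for all `t ≥ 0`, and
`∑_{t=0}^{TK−1} (1/n) ∑ᵢ ‖1/√(uᵢ^{t−2}+δ) − 1/√(uᵢ^{t−1}+δ)‖² ≤ 2d B_∞⁴/δ³`. -/
theorem stmt12 (d n T K : ℕ) (hn : 0 < n) (hT : 0 < T) (hK : 0 < K)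
    (δ Binf : ℝ) (hδ : 0 < δ) (hBinf : 0 < Binf)
    (g : Fin n → ℕ → EuclideanSpace ℝ (Fin d))
    (hg : ∀ (i : Fin n) (t : ℕ) (k : Fin d), |g i t k| ≤ Binf)
    (u : Fin n → ℤ → EuclideanSpace ℝ (Fin d))
    (hu1 : ∀ i, u i (-1) = 0) (hu2 : ∀ i, u i (-2) = 0)
    (hu : ∀ (i : Fin n) (t : ℕ),
      u i (t : ℤ) = ((t : ℝ) + 1)⁻¹ • ∑ s ∈ Finset.range (t + 1), odot (g i s) (g i s)) :
    (∀ (t : ℕ) (i : Fin n) (k : Fin d), |u i (t : ℤ) k| ≤ Binf ^ 2) ∧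
    ∑ t ∈ Finset.range (T * K),
        (1 / (n : ℝ)) * ∑ i, ‖invSq (u i ((t : ℤ) - 2)) δ - invSq (u i ((t : ℤ) - 1)) δ‖ ^ 2
      ≤ 2 * d * Binf ^ 4 / δ ^ 3 := by
  have happ : ∀ (i : Fin n) (t : ℕ) (k : Fin d),
      u i (t : ℤ) k = ((t:ℝ)+1)⁻¹ * ∑ s ∈ Finset.range (t+1), (g i s k)^2 := by
    intro i t k
    have h := congrArg (fun v => v k) (hu i t)
    have hsum : (∑ s ∈ Finset.range (t+1), odot (g i s) (g i s)) k
        = ∑ s ∈ Finset.range (t+1), odot (g i s) (g i s) k :=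
      by simp
    rw [h]
    simp [hsum, odot, sq]
  have hgsq : ∀ (i : Fin n) (s : ℕ) (k : Fin d), (g i s k)^2 ≤ Binf^2 := by
    intro i s k
    have := hg i s k
    nlinarith [abs_nonneg (g i s k), sq_abs (g i s k)]
  have hS : ∀ (i : Fin n) (t : ℕ) (k : Fin d),
      0 ≤ ∑ s ∈ Finset.range (t+1), (g i s k)^2 ∧
      ∑ s ∈ Finset.range (t+1), (g i s k)^2 ≤ ((t:ℝ)+1) * Binf^2 := by
    intro i t k
    constructor
    · positivity
    · calc ∑ s ∈ Finset.range (t+1), (g i s k)^2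
          ≤ ∑ s ∈ Finset.range (t+1), Binf^2 := Finset.sum_le_sum fun s _ => hgsq i s k
        _ = ((t:ℝ)+1) * Binf^2 := by
            rw [Finset.sum_const, Finset.card_range]; push_cast; ring
  have part1 : ∀ (t : ℕ) (i : Fin n) (k : Fin d), |u i (t : ℤ) k| ≤ Binf ^ 2 := by
    intro t i k
    rw [happ, abs_of_nonneg (by positivity)]
    rw [inv_mul_le_iff₀ (by positivity)]
    nlinarith [(hS i t k).2]
  refine ⟨part1, ?_⟩
  have hnn : ∀ (i : Fin n) (t : ℕ) (k : Fin d), 0 ≤ u i (t:ℤ) k := by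
    intro i t k; rw [happ]; positivity
  have hnn' : ∀ (i : Fin n) (m : ℕ) (k : Fin d), 0 ≤ u i ((m:ℤ)-1) k := by
    intro i m k
    cases m with
    | zero =>
      rw [show ((0:ℕ):ℤ)-1 = -1 from by norm_num, hu1]
      norm_num
    | succ r =>
      rw [show (((r+1:ℕ)):ℤ)-1 = (r:ℤ) from by push_cast; ring]
      exact hnn i r k
  -- difference bound
  have hdiff : ∀ (i : Fin n) (m : ℕ) (k : Fin d),
      |u i ((m:ℤ)-1) k - u i (m:ℤ) k| ≤ 2*Binf^2 / ((m:ℝ)+1) := by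
    intro i m k
    cases m with
    | zero =>
      rw [show ((0:ℕ):ℤ)-1 = -1 from by norm_num, hu1]
      have h0 : (0 : EuclideanSpace ℝ (Fin d)) k = 0 := rfl
      rw [h0, zero_sub, abs_neg]
      have hp : |u i ((0:ℕ):ℤ) k| ≤ Binf^2 := part1 0 i k
      norm_num at hp ⊢
      nlinarith [sq_nonneg Binf]
    | succ r =>
      rw [show (((r+1:ℕ)):ℤ)-1 = (r:ℤ) from by push_cast; ring]
      have hb1 := (hS i r k).1
      have hb2 := (hS i r k).2
      have hb3 := hgsq i (r+1) k
      have hb4 : (0:ℝ) ≤ (g i (r+1) k)^2 := sq_nonneg _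
      have e : u i (r:ℤ) k - u i ((r+1:ℕ):ℤ) k
          = ((∑ s ∈ Finset.range (r+1), (g i s k)^2) - (g i (r+1) k)^2*((r:ℝ)+1))
              / (((r:ℝ)+1)*((r:ℝ)+2)) := by
        rw [happ i r k, happ i (r+1) k, Finset.sum_range_succ (fun s => (g i s k)^2) (r+1)]
        push_cast
        field_simp
        ring
      rw [e, abs_div, abs_of_pos (show (0:ℝ) < ((r:ℝ)+1)*((r:ℝ)+2) from by positivity)]
      rw [div_le_div_iff₀ (by positivity) (by positivity)]
      have habs : |(∑ s ∈ Finset.range (r+1), (g i s k)^2) - (g i (r+1) k)^2*((r:ℝ)+1)|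
          ≤ 2*Binf^2*((r:ℝ)+1) := by
        rw [abs_le]
        constructor <;> nlinarith
      push_cast
      nlinarith [mul_le_mul_of_nonneg_right habs (show (0:ℝ) ≤ (r:ℝ)+2 from by positivity)]
  have hsd2 : Real.sqrt δ ^ 2 = δ := Real.sq_sqrt hδ.le
  have hδ' : δ ≠ 0 := ne_of_gt hδ
  -- per-term norm bound
  have hterm : ∀ (m : ℕ) (i : Fin n),
      ‖invSq (u i ((m:ℤ)-1)) δ - invSq (u i (m:ℤ)) δ‖^2
        ≤ (d:ℝ) * (Binf^4 / (((m:ℝ)+1)^2 * δ^3)) := by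
    intro m i
    rw [normsq_eq]
    have hm1 : ((m:ℝ)+1) ≠ 0 := by positivity
    calc ∑ k, ((invSq (u i ((m:ℤ)-1)) δ - invSq (u i (m:ℤ)) δ) k)^2
        ≤ ∑ _k : Fin d, Binf^4 / (((m:ℝ)+1)^2 * δ^3) := by
          apply Finset.sum_le_sum
          intro k _
          have hap : (invSq (u i ((m:ℤ)-1)) δ - invSq (u i (m:ℤ)) δ) k
              = (Real.sqrt (u i ((m:ℤ)-1) k + δ))⁻¹ - (Real.sqrt (u i (m:ℤ) k + δ))⁻¹ := by simp [invSq]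
          rw [hap]
          have hlip := lip_aux hδ _ _ (hnn' i m k) (hnn i m k)
          have h1 : |(Real.sqrt (u i ((m:ℤ)-1) k + δ))⁻¹ - (Real.sqrt (u i (m:ℤ) k + δ))⁻¹|
              ≤ (2*Binf^2/((m:ℝ)+1)) / (2*δ*Real.sqrt δ) := by
            refine le_trans hlip ?_
            gcongr
            exact hdiff i m k
          calc ((Real.sqrt (u i ((m:ℤ)-1) k + δ))⁻¹ - (Real.sqrt (u i (m:ℤ) k + δ))⁻¹)^2
              = |(Real.sqrt (u i ((m:ℤ)-1) k + δ))⁻¹ - (Real.sqrt (u i (m:ℤ) k + δ))⁻¹|^2 :=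
                (sq_abs _).symm
            _ ≤ ((2*Binf^2/((m:ℝ)+1)) / (2*δ*Real.sqrt δ))^2 := by
                exact pow_le_pow_left₀ (abs_nonneg _) h1 2
            _ = Binf^4 / (((m:ℝ)+1)^2 * δ^3) := by
                rw [div_pow, div_pow, mul_pow, mul_pow, hsd2]
                field_simp
      _ = (d:ℝ) * (Binf^4 / (((m:ℝ)+1)^2 * δ^3)) := by
          rw [Finset.sum_const, Finset.card_univ, Fintype.card_fin, nsmul_eq_mul]
  -- assemble the sum
  obtain ⟨M, hM⟩ : ∃ M, T*K = M+1 := ⟨T*K - 1, by have := Nat.mul_pos hT hK; omega⟩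
  rw [hM, Finset.sum_range_succ']
  have h0 : (1 / (n : ℝ)) * ∑ i, ‖invSq (u i (((0:ℕ) : ℤ) - 2)) δ
      - invSq (u i (((0:ℕ) : ℤ) - 1)) δ‖ ^ 2 = 0 := by
    have e2 : ((0:ℕ):ℤ) - 2 = -2 := by norm_num
    have e1 : ((0:ℕ):ℤ) - 1 = -1 := by norm_num
    simp [e1, e2, hu1, hu2]
  rw [h0, add_zero]
  have hcast : ∀ m : ℕ, (((m+1:ℕ)):ℤ) - 2 = (m:ℤ) - 1 := by intro m; push_cast; ring
  have hcast' : ∀ m : ℕ, (((m+1:ℕ)):ℤ) - 1 = (m:ℤ) := by intro m; push_cast; ring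
  have hstep : ∀ m ∈ Finset.range M,
      (1 / (n : ℝ)) * ∑ i, ‖invSq (u i (((m+1:ℕ) : ℤ) - 2)) δ
        - invSq (u i (((m+1:ℕ) : ℤ) - 1)) δ‖ ^ 2
      ≤ ((d:ℝ) * Binf^4 / δ^3) * (((m:ℝ)+1)^2)⁻¹ := by
    intro m _
    rw [hcast m, hcast' m]
    have hsum : ∑ i, ‖invSq (u i ((m:ℤ)-1)) δ - invSq (u i (m:ℤ)) δ‖^2
        ≤ (n:ℝ) * ((d:ℝ) * (Binf^4 / (((m:ℝ)+1)^2 * δ^3))) := by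
      calc ∑ i, ‖invSq (u i ((m:ℤ)-1)) δ - invSq (u i (m:ℤ)) δ‖^2
          ≤ ∑ _i : Fin n, (d:ℝ) * (Binf^4 / (((m:ℝ)+1)^2 * δ^3)) :=
            Finset.sum_le_sum fun i _ => hterm m i
        _ = (n:ℝ) * ((d:ℝ) * (Binf^4 / (((m:ℝ)+1)^2 * δ^3))) := by
            rw [Finset.sum_const, Finset.card_univ, Fintype.card_fin, nsmul_eq_mul]
    have hn' : (0:ℝ) < n := by exact_mod_cast hn
    calc (1 / (n : ℝ)) * ∑ i, ‖invSq (u i ((m:ℤ)-1)) δ - invSq (u i (m:ℤ)) δ‖^2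
        ≤ (1 / (n : ℝ)) * ((n:ℝ) * ((d:ℝ) * (Binf^4 / (((m:ℝ)+1)^2 * δ^3)))) := by
          apply mul_le_mul_of_nonneg_left hsum (by positivity)
      _ = ((d:ℝ) * Binf^4 / δ^3) * (((m:ℝ)+1)^2)⁻¹ := by
          field_simp
  calc ∑ m ∈ Finset.range M, (1 / (n : ℝ)) * ∑ i, ‖invSq (u i (((m+1:ℕ) : ℤ) - 2)) δ
        - invSq (u i (((m+1:ℕ) : ℤ) - 1)) δ‖ ^ 2
      ≤ ∑ m ∈ Finset.range M, ((d:ℝ) * Binf^4 / δ^3) * (((m:ℝ)+1)^2)⁻¹ :=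
        Finset.sum_le_sum hstep
    _ = ((d:ℝ) * Binf^4 / δ^3) * ∑ m ∈ Finset.range M, (((m:ℝ)+1)^2)⁻¹ := by
        rw [Finset.mul_sum]
    _ ≤ ((d:ℝ) * Binf^4 / δ^3) * 2 := by
        apply mul_le_mul_of_nonneg_left (basel M) (by positivity)
    _ = 2 * d * Binf ^ 4 / δ ^ 3 := by ring
end
end

section
/- Let δ > 0, let t ≥ 1 be an integer, and let u', g ∈ ℝ^d satisfy 0 ≤ u'_j ≤ B_∞² and 0 ≤ (g ∘ g)_j ≤ B_∞² for every coordinate j. Set u = ((t−1)/t)·u' + (1/t)·g ∘ g. Then ‖1/√(u+δ) − 1/√(u'+δ)‖² ≤ d·B_∞⁴/(t²·δ³). -/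
open MeasureTheory Finset Real
open scoped RealInnerProductSpace

noncomputable section

theorem auxKey (δ A B : ℝ) (hδ : 0 < δ) (hA : δ ≤ A) (hB : δ ≤ B) :
    ((Real.sqrt A)⁻¹ - (Real.sqrt B)⁻¹) ^ 2 ≤ (A - B) ^ 2 / (4 * δ ^ 3) := by
  set a := Real.sqrt A with ha'
  set b := Real.sqrt B with hb'
  have hApos : 0 < A := lt_of_lt_of_le hδ hA
  have hBpos : 0 < B := lt_of_lt_of_le hδ hB
  have ha : 0 < a := Real.sqrt_pos.mpr hApos
  have hb : 0 < b := Real.sqrt_pos.mpr hBpos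
  have ha2 : a ^ 2 = A := Real.sq_sqrt hApos.le
  have hb2 : b ^ 2 = B := Real.sq_sqrt hBpos.le
  have hsδ : 0 < Real.sqrt δ := Real.sqrt_pos.mpr hδ
  have hδ2 : Real.sqrt δ ^ 2 = δ := Real.sq_sqrt hδ.le
  have hsa : Real.sqrt δ ≤ a := Real.sqrt_le_sqrt hA
  have hsb : Real.sqrt δ ≤ b := Real.sqrt_le_sqrt hB
  have hbig : 4 * δ ^ 3 ≤ (a * b) ^ 2 * (a + b) ^ 2 := by
    have hab : δ ≤ a * b := by nlinarith [mul_le_mul hsa hsb hsδ.le ha.le]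
    have hab2 : δ ^ 2 ≤ (a * b) ^ 2 := by nlinarith
    have hsum : 4 * δ ≤ (a + b) ^ 2 := by nlinarith [sq_nonneg (a - b)]
    nlinarith [mul_le_mul hab2 hsum (by positivity) (by positivity)]
  have heq : (a⁻¹ - b⁻¹) ^ 2 * ((a * b) ^ 2 * (a + b) ^ 2) = (A - B) ^ 2 := by
    have h1 : (a⁻¹ - b⁻¹) * (a * b) = b - a := by field_simp
    calc (a⁻¹ - b⁻¹) ^ 2 * ((a * b) ^ 2 * (a + b) ^ 2)
        = ((a⁻¹ - b⁻¹) * (a * b) * (a + b)) ^ 2 := by ring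
      _ = ((b - a) * (a + b)) ^ 2 := by rw [h1]
      _ = (b ^ 2 - a ^ 2) ^ 2 := by ring
      _ = (A - B) ^ 2 := by rw [ha2, hb2]; ring
  have hbigpos : 0 < (a * b) ^ 2 * (a + b) ^ 2 := by positivity
  have h2 : (a⁻¹ - b⁻¹) ^ 2 = (A - B) ^ 2 / ((a * b) ^ 2 * (a + b) ^ 2) := by
    field_simp at heq ⊢
    linarith [heq]
  rw [h2]
  exact div_le_div_of_nonneg_left (by positivity) (by positivity) hbig

/-- One step of the AdaGrad second-momentum update at time `t ≥ 1` moves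
`1/√(u+δ)` by at most `d B_∞⁴/(t²δ³)` in squared Euclidean norm. -/
theorem stmt18 (d : ℕ) (δ Binf : ℝ) (hδ : 0 < δ) (hBinf : 0 < Binf)
    (t : ℕ) (ht : 1 ≤ t)
    (u' g : EuclideanSpace ℝ (Fin d))
    (hu' : ∀ j, 0 ≤ u' j ∧ u' j ≤ Binf ^ 2)
    (hg : ∀ j, 0 ≤ odot g g j ∧ odot g g j ≤ Binf ^ 2) :
    ‖invSq ((((t : ℝ) - 1) / (t : ℝ)) • u' + ((t : ℝ))⁻¹ • odot g g) δ - invSq u' δ‖ ^ 2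
      ≤ d * Binf ^ 4 / ((t : ℝ) ^ 2 * δ ^ 3) := by
  have ht' : (1 : ℝ) ≤ (t : ℝ) := by exact_mod_cast ht
  have htpos : (0 : ℝ) < (t : ℝ) := by linarith
  set u : EuclideanSpace ℝ (Fin d) :=
    (((t : ℝ) - 1) / (t : ℝ)) • u' + ((t : ℝ))⁻¹ • odot g g with hu
  have hnorm : ‖invSq u δ - invSq u' δ‖ ^ 2
      = ∑ k, ((Real.sqrt (u k + δ))⁻¹ - (Real.sqrt (u' k + δ))⁻¹) ^ 2 := by
    rw [EuclideanSpace.norm_eq, Real.sq_sqrt (by positivity)]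
    refine Finset.sum_congr rfl fun k _ => ?_
    simp [invSq, Real.norm_eq_abs, sq_abs]
  rw [hnorm]
  have hterm : ∀ k : Fin d,
      ((Real.sqrt (u k + δ))⁻¹ - (Real.sqrt (u' k + δ))⁻¹) ^ 2
        ≤ Binf ^ 4 / ((t : ℝ) ^ 2 * δ ^ 3) := by
    intro k
    have huk : 0 ≤ u k := by
      have := (hu' k).1
      have := (hg k).1
      have h1 : 0 ≤ ((t : ℝ) - 1) / (t : ℝ) := div_nonneg (by linarith) htpos.le
      have h2 : 0 ≤ ((t : ℝ))⁻¹ := by positivity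
      simp only [hu, PiLp.add_apply, PiLp.smul_apply, smul_eq_mul]
      nlinarith
    have hkey := auxKey δ (u k + δ) (u' k + δ) hδ (by linarith) (by linarith [(hu' k).1])
    refine hkey.trans ?_
    have hdiff : (u k - u' k) ^ 2 ≤ Binf ^ 4 / (t : ℝ) ^ 2 := by
      have hdiffeq : u k - u' k = ((t : ℝ))⁻¹ * (odot g g k - u' k) := by
        simp only [hu, PiLp.add_apply, PiLp.smul_apply, smul_eq_mul]
        field_simp
        ring
      rw [hdiffeq]
      have habs : (odot g g k - u' k) ^ 2 ≤ Binf ^ 4 := by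
        nlinarith [(hu' k).1, (hu' k).2, (hg k).1, (hg k).2]
      calc (((t : ℝ))⁻¹ * (odot g g k - u' k)) ^ 2
          = (odot g g k - u' k) ^ 2 * ((t:ℝ)^2)⁻¹ := by ring
        _ ≤ Binf ^ 4 * ((t:ℝ)^2)⁻¹ :=
            mul_le_mul_of_nonneg_right habs (by positivity)
        _ = Binf ^ 4 / (t : ℝ) ^ 2 := by rw [div_eq_mul_inv]
    have h3 : (u k + δ - (u' k + δ)) ^ 2 = (u k - u' k) ^ 2 := by ring
    rw [h3]
    calc (u k - u' k) ^ 2 / (4 * δ ^ 3)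
        ≤ (Binf ^ 4 / (t : ℝ) ^ 2) / (4 * δ ^ 3) := by
          apply div_le_div_of_nonneg_right hdiff (by positivity)
      _ ≤ Binf ^ 4 / ((t : ℝ) ^ 2 * δ ^ 3) := by
          rw [div_div]
          apply div_le_div_of_nonneg_left (by positivity) (by positivity)
          nlinarith [sq_nonneg ((t:ℝ)), pow_pos hδ 3]
  calc ∑ k, ((Real.sqrt (u k + δ))⁻¹ - (Real.sqrt (u' k + δ))⁻¹) ^ 2
      ≤ ∑ _k : Fin d, Binf ^ 4 / ((t : ℝ) ^ 2 * δ ^ 3) :=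
        Finset.sum_le_sum fun k _ => hterm k
    _ = d * Binf ^ 4 / ((t : ℝ) ^ 2 * δ ^ 3) := by
        rw [Finset.sum_const, Finset.card_univ, Fintype.card_fin]
        simp [mul_div_assoc]
end
end
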